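/- For any configuration c = ⟨q, v⟩ of the two-register Minsky machine with v(a) > 0, the focused sequent ⊢ ?^∞Π, (⟨c⟩ with one occurrence of ?^a ¬r_a removed), [¬r_a] — i.e. the premise obtained by applying the ldecide rule to an occurrence of ?^a ¬r_a in ⊢ ?^∞Π, ⟨c⟩ — is not derivable in the focused sequent calculus for MSEL_Σ2; likewise with b and r_b in place of a and r_a when v(b) > 0. Consequently, any focused proof of ⊢ ?^∞Π, ⟨c⟩ must begin (reading from the conclusion) with an instance of udecide focusing on an element of ?^∞Π. -/
import Mathlib


namespace Msel

/-- Subexponential labels of the signature `Σ₂ = ⟨{∞, a, b}, {∞}, ≤⟩`. -/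
inductive Lbl : Type
  | inf  -- the unbounded label ∞
  | la   -- the bounded label a
  | lb   -- the bounded label b
deriving DecidableEq

/-- The pre-order on labels: the reflexive-transitive closure of `a ≤ ∞` and `b ≤ ∞`. -/
def Lbl.le (u v : Lbl) : Prop := u = v ∨ v = Lbl.inf

/-- A label is unbounded iff it is ∞. -/
def Lbl.unb (u : Lbl) : Prop := u = Lbl.inf

/-- Formulas of multiplicative subexponential logic MSEL_Σ₂.
Atoms are named by natural numbers. -/
inductive Fm : Type
  | atom (p : ℕ)            -- atom p
  | natom (p : ℕ)           -- negated atom ¬p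
  | tens (A B : Fm)         -- A ⊗ B
  | one                     -- 1
  | par (A B : Fm)          -- A ⅋ B
  | bot                     -- ⊥
  | bang (u : Lbl) (A : Fm) -- !^u A
  | qm (u : Lbl) (A : Fm)   -- ?^u A
deriving DecidableEq

/-- The (unfocused) one-sided sequent calculus for MSEL_Σ₂; `Der Γ` means `⊢ Γ` is derivable. -/
inductive Der : Multiset Fm → Prop
  | init (p : ℕ) : Der {Fm.atom p, Fm.natom p}
  | tens {Γ Δ : Multiset Fm} {A B : Fm} :
      Der (A ::ₘ Γ) → Der (B ::ₘ Δ) → Der (Fm.tens A B ::ₘ (Γ + Δ))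
  | one : Der {Fm.one}
  | par {Γ : Multiset Fm} {A B : Fm} :
      Der (A ::ₘ B ::ₘ Γ) → Der (Fm.par A B ::ₘ Γ)
  | bot {Γ : Multiset Fm} : Der Γ → Der (Fm.bot ::ₘ Γ)
  | qm {Γ : Multiset Fm} {A : Fm} {u : Lbl} :
      Der (A ::ₘ Γ) → Der (Fm.qm u A ::ₘ Γ)
  | bang {Γ : Multiset Fm} {C : Fm} {u : Lbl} :
      (∀ F ∈ Γ, ∃ v B, F = Fm.qm v B ∧ Lbl.le u v) →
      Der (C ::ₘ Γ) → Der (Fm.bang u C ::ₘ Γ)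
  | weak {Γ : Multiset Fm} {A : Fm} :
      Der Γ → Der (Fm.qm Lbl.inf A ::ₘ Γ)
  | contr {Γ : Multiset Fm} {A : Fm} :
      Der (Fm.qm Lbl.inf A ::ₘ Fm.qm Lbl.inf A ::ₘ Γ) →
      Der (Fm.qm Lbl.inf A ::ₘ Γ)

/-- Positive formulas: atoms, ⊗, 1, !. -/
def Fm.isPos : Fm → Prop
  | .atom _ => True
  | .tens _ _ => True
  | .one => True
  | .bang _ _ => True
  | _ => False

/-- Negative formulas: negated atoms, ⅋, ⊥, ?. -/
def Fm.isNeg : Fm → Prop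
  | .natom _ => True
  | .par _ _ => True
  | .bot => True
  | .qm _ _ => True
  | _ => False

/-- Neutral formulas: positive formulas, atoms, negated atoms and ?-formulas
(i.e. everything except ⅋ and ⊥). -/
def Fm.isNeutral : Fm → Prop
  | .par _ _ => False
  | .bot => False
  | _ => True

/-- The focused sequent calculus for MSEL_Σ₂.
`FDer Γ none` is the unfocused sequent `⊢ Γ`;
`FDer Ω (some A)` is the focused sequent `⊢ Ω, [A]`. -/
inductive FDer : Multiset Fm → Option Fm → Prop
  | finit {Θ : Multiset Fm} (p : ℕ) :
      (∀ F ∈ Θ, ∃ B, F = Fm.qm Lbl.inf B) →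
      FDer (Fm.natom p ::ₘ Θ) (some (Fm.atom p))
  | ftens {Θ Ω₁ Ω₂ : Multiset Fm} {B C : Fm} :
      (∀ F ∈ Θ, ∃ A, F = Fm.qm Lbl.inf A) →
      (∀ F ∈ Ω₁, F.isNeutral) → (∀ F ∈ Ω₂, F.isNeutral) →
      FDer (Θ + Ω₁) (some B) → FDer (Θ + Ω₂) (some C) →
      FDer (Θ + Ω₁ + Ω₂) (some (Fm.tens B C))
  | fone {Θ : Multiset Fm} :
      (∀ F ∈ Θ, ∃ B, F = Fm.qm Lbl.inf B) → FDer Θ (some Fm.one)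
  | fbang {Γ Δ : Multiset Fm} {u : Lbl} {C : Fm} :
      (∀ F ∈ Γ, ∃ v B, F = Fm.qm v B ∧ Lbl.le u v) →
      (∀ F ∈ Δ, ∃ B, F = Fm.qm Lbl.inf B) →
      FDer (C ::ₘ Γ) none → FDer (Γ + Δ) (some (Fm.bang u C))
  | blur {Ω : Multiset Fm} {N : Fm} :
      N.isNeg → (∀ F ∈ Ω, F.isNeutral) →
      FDer (N ::ₘ Ω) none → FDer Ω (some N)
  | par {Γ : Multiset Fm} {A B : Fm} :
      FDer (A ::ₘ B ::ₘ Γ) none → FDer (Fm.par A B ::ₘ Γ) none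
  | bot {Γ : Multiset Fm} : FDer Γ none → FDer (Fm.bot ::ₘ Γ) none
  | decide {Ω : Multiset Fm} {P : Fm} :
      P.isPos → (∀ F ∈ Ω, F.isNeutral) →
      FDer Ω (some P) → FDer (P ::ₘ Ω) none
  | ldecide {Ω : Multiset Fm} {u : Lbl} {A : Fm} :
      u ≠ Lbl.inf → (∀ F ∈ Ω, F.isNeutral) →
      FDer Ω (some A) → FDer (Fm.qm u A ::ₘ Ω) none
  | udecide {Ω : Multiset Fm} {A : Fm} :
      (∀ F ∈ Ω, F.isNeutral) →
      FDer (Fm.qm Lbl.inf A ::ₘ Ω) (some A) →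
      FDer (Fm.qm Lbl.inf A ::ₘ Ω) none

/-! ## Two-register Minsky machines -/

/-- The instruction set of a two-register Minsky machine. -/
inductive Instr : Type
  | halt | incra | incrb | decra | decrb | isza | iszb
deriving DecidableEq

/-- A configuration `⟨q, v⟩`: a state (states are names by natural numbers,
with `0` the distinguished halting state `*`) together with the values
`v(a)` and `v(b)` of the two registers. -/
structure Cfg : Type where
  q : ℕ
  a : ℕ
  b : ℕ
deriving DecidableEq

/-- A two-register Minsky machine is presented by its finite labelled transition
table: a finite list of (source state, instruction, target state) triples. -/
abbrev Prog : Type := List (ℕ × Instr × ℕ)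

/-- The labelled transition relation between configurations generated by the
table `P`, following the seven schemas (the halting state is `0`). -/
inductive Step (P : Prog) : Cfg → Instr → Cfg → Prop
  | halt {q m n : ℕ} : (q, Instr.halt, 0) ∈ P → q ≠ 0 →
      Step P ⟨q, m, n⟩ Instr.halt ⟨0, 0, 0⟩
  | incra {q r m n : ℕ} : (q, Instr.incra, r) ∈ P → q ≠ r →
      Step P ⟨q, m, n⟩ Instr.incra ⟨r, m + 1, n⟩
  | incrb {q r m n : ℕ} : (q, Instr.incrb, r) ∈ P → q ≠ r →
      Step P ⟨q, m, n⟩ Instr.incrb ⟨r, m, n + 1⟩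
  | decra {q r m n : ℕ} : (q, Instr.decra, r) ∈ P → q ≠ r →
      Step P ⟨q, m + 1, n⟩ Instr.decra ⟨r, m, n⟩
  | decrb {q r m n : ℕ} : (q, Instr.decrb, r) ∈ P → q ≠ r →
      Step P ⟨q, m, n + 1⟩ Instr.decrb ⟨r, m, n⟩
  | isza {q r n : ℕ} : (q, Instr.isza, r) ∈ P → q ≠ r →
      Step P ⟨q, 0, n⟩ Instr.isza ⟨r, 0, n⟩
  | iszb {q r m : ℕ} : (q, Instr.iszb, r) ∈ P → q ≠ r →
      Step P ⟨q, m, 0⟩ Instr.iszb ⟨r, m, 0⟩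

/-- The transition relation is deterministic. -/
def Deterministic (P : Prog) : Prop :=
  ∀ {c : Cfg} {i₁ i₂ : Instr} {d₁ d₂ : Cfg},
    Step P c i₁ d₁ → Step P c i₂ d₂ → i₁ = i₂ ∧ d₁ = d₂

/-- Every entry of the table generates transitions fitting one of the seven
schemas: halt entries target the halting state `0` and have non-halting source,
and the other entries have distinct source and target states. -/
def WellFormed (P : Prog) : Prop :=
  ∀ e ∈ P, (e.2.1 = Instr.halt → e.2.2 = 0 ∧ e.1 ≠ 0) ∧
           (e.2.1 ≠ Instr.halt → e.1 ≠ e.2.2)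

/-- The machine halts from `c₀` if some finite sequence of transitions leads
from `c₀` to the halting configuration `⟨*, {a:0, b:0}⟩`. -/
def Halts (P : Prog) (c₀ : Cfg) : Prop :=
  Relation.ReflTransGen (fun c d => ∃ i, Step P c i d) c₀ ⟨0, 0, 0⟩

/-! ## The encoding -/

/-- The atom `r_a`. -/
def raA : Fm := Fm.atom 0
/-- The atom `r_b`. -/
def rbA : Fm := Fm.atom 1
/-- The atom `h`. -/
def hA : Fm := Fm.atom 2
/-- The negated atom `¬r_a`. -/
def nRa : Fm := Fm.natom 0
/-- The negated atom `¬r_b`. -/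
def nRb : Fm := Fm.natom 1
/-- The negated atom `¬h`. -/
def nH : Fm := Fm.natom 2
/-- The atom for state `q` (distinct from `r_a`, `r_b`, `h`). -/
def stA (q : ℕ) : Fm := Fm.atom (q + 3)
/-- The negated atom `¬q` for state `q`. -/
def nSt (q : ℕ) : Fm := Fm.natom (q + 3)
/-- The formula `?^a ¬r_a`. -/
def qa : Fm := Fm.qm Lbl.la nRa
/-- The formula `?^b ¬r_b`. -/
def qb : Fm := Fm.qm Lbl.lb nRb

/-- The formulas encoding one entry of the transition table. -/
def encInstr : ℕ × Instr × ℕ → Multiset Fm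
  | (q, Instr.halt, _) =>
      {Fm.tens (stA q) nH,
       Fm.tens (Fm.tens hA (Fm.bang Lbl.la raA)) nH,
       Fm.tens (Fm.tens hA (Fm.bang Lbl.lb rbA)) nH,
       Fm.tens hA (Fm.bang Lbl.inf Fm.one)}
  | (q, Instr.incra, r) => {Fm.tens (stA q) (Fm.par (nSt r) qa)}
  | (q, Instr.incrb, r) => {Fm.tens (stA q) (Fm.par (nSt r) qb)}
  | (q, Instr.decra, r) => {Fm.tens (Fm.tens (stA q) (Fm.bang Lbl.la raA)) (nSt r)}
  | (q, Instr.decrb, r) => {Fm.tens (Fm.tens (stA q) (Fm.bang Lbl.lb rbA)) (nSt r)}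
  | (q, Instr.isza, r) => {Fm.tens (stA q) (Fm.bang Lbl.lb (nSt r))}
  | (q, Instr.iszb, r) => {Fm.tens (stA q) (Fm.bang Lbl.la (nSt r))}

/-- The context `Π` encoding the transition relation of the machine `P`. -/
def PiCtx (P : Prog) : Multiset Fm := (P.map encInstr).sum

/-- `?^∞ Γ`: each element of `Γ` prefixed by `?^∞`. -/
def qmInf (Γ : Multiset Fm) : Multiset Fm := Γ.map (Fm.qm Lbl.inf)

/-- The encoding `⟨c⟩` of a configuration: `v(a)` copies of `?^a ¬r_a`,
`v(b)` copies of `?^b ¬r_b`, and `¬q`. -/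
def encCfg (c : Cfg) : Multiset Fm :=
  Multiset.replicate c.a qa + Multiset.replicate c.b qb + {nSt c.q}

/-- The sequent `⊢ ?^∞Π, ⟨c⟩` encoding the halting problem from `c`. -/
def encSeq (P : Prog) (c : Cfg) : Multiset Fm := qmInf (PiCtx P) + encCfg c

/-! ## Concrete Gödel encodings -/

/-- Gödel code of a label. -/
def Lbl.code : Lbl → ℕ
  | .inf => 0 | .la => 1 | .lb => 2

/-- A concrete (effective) Gödel encoding of formulas. -/
def Fm.code : Fm → ℕ
  | .atom p => Nat.pair 0 p
  | .natom p => Nat.pair 1 p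
  | .tens A B => Nat.pair 2 (Nat.pair A.code B.code)
  | .one => Nat.pair 3 0
  | .par A B => Nat.pair 4 (Nat.pair A.code B.code)
  | .bot => Nat.pair 5 0
  | .bang u A => Nat.pair 6 (Nat.pair u.code A.code)
  | .qm u A => Nat.pair 7 (Nat.pair u.code A.code)

/-- Gödel code of a list of natural numbers. -/
def codeList : List ℕ → ℕ
  | [] => 0
  | x :: l => Nat.pair x (codeList l) + 1

/-- A concrete (effective) Gödel encoding of finite multisets of formulas
(a sequent is coded by the sorted list of the codes of its elements). -/
def codeSeq (Γ : Multiset Fm) : ℕ :=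
  codeList ((Γ.map Fm.code).sort (· ≤ ·))

/-- Gödel code of an instruction. -/
def Instr.code : Instr → ℕ
  | .halt => 0 | .incra => 1 | .incrb => 2 | .decra => 3
  | .decrb => 4 | .isza => 5 | .iszb => 6

/-- A concrete (effective) Gödel encoding of machines. -/
def codeProg (P : Prog) : ℕ :=
  codeList (P.map fun e => Nat.pair e.1 (Nat.pair e.2.1.code e.2.2))

/-- A concrete (effective) Gödel encoding of configurations. -/
def codeCfg (c : Cfg) : ℕ := Nat.pair c.q (Nat.pair c.a c.b)


/-! ## Auxiliary machinery for Statement 12 -/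

/-- Formulas in the "good" class (a superset of the subformula closure of the
encoding) for the atom `p`: no tensor/par operand is the naked literal
`atom p` (resp. `natom p` for tensors), and no `?`-body is `atom p`. -/
def Good (p : ℕ) : Fm → Prop
  | .tens A B => Good p A ∧ Good p B ∧ A ≠ .atom p ∧ A ≠ .natom p ∧
      B ≠ .atom p ∧ B ≠ .natom p
  | .par A B => Good p A ∧ Good p B ∧ A ≠ .atom p ∧ B ≠ .atom p
  | .bang _ A => Good p A
  | .qm _ A => Good p A ∧ A ≠ .atom p
  | _ => True

private lemma count_zero_of_qm {p : ℕ} {Θ : Multiset Fm}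
    (h : ∀ F ∈ Θ, ∃ v B, F = Fm.qm v B) :
    Θ.count (Fm.atom p) = 0 ∧ Θ.count (Fm.natom p) = 0 := by
  constructor <;> rw [Multiset.count_eq_zero] <;> intro hm <;>
    obtain ⟨v, B, hB⟩ := h _ hm <;> cases hB

/-- The key counting invariant: in any focused derivation whose formulas are
all `Good p`, the number of naked `¬p`'s (counting the focus) never exceeds
the number of naked `p`'s (counting the focus). -/
lemma fder_count (p : ℕ) {Γ : Multiset Fm} {f : Option Fm} (h : FDer Γ f) :
    (∀ F ∈ Γ, Good p F) → (∀ A, f = some A → Good p A) →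
    Γ.count (Fm.natom p) + (if f = some (Fm.natom p) then 1 else 0)
      ≤ Γ.count (Fm.atom p) + (if f = some (Fm.atom p) then 1 else 0) := by
  induction h with
  | @finit Θ q hΘ =>
    intro _ _
    obtain ⟨h1, h2⟩ := count_zero_of_qm (p := p) (Θ := Θ)
      (fun F hF => (hΘ F hF).elim fun B hB => ⟨Lbl.inf, B, hB⟩)
    simp [Multiset.count_cons, h1, h2]
    by_cases hq : p = q
    · subst hq; simp
    · simp [hq, Ne.symm hq]
  | @ftens Θ Ω₁ Ω₂ B C hΘ hΩ₁ hΩ₂ hd1 hd2 ih1 ih2 =>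
    intro hG hf
    obtain ⟨h1, h2⟩ := count_zero_of_qm (p := p) (Θ := Θ)
      (fun F hF => (hΘ F hF).elim fun B hB => ⟨Lbl.inf, B, hB⟩)
    have hB : Good p B ∧ B ≠ Fm.atom p ∧ B ≠ Fm.natom p := by
      have := hf _ rfl
      simp [Good] at this
      tauto
    have hC : Good p C ∧ C ≠ Fm.atom p ∧ C ≠ Fm.natom p := by
      have := hf _ rfl
      simp [Good] at this
      tauto
    have i1 := ih1 (fun F hF => hG F (by
        rcases Multiset.mem_add.1 hF with h | h
        · exact Multiset.mem_add.2 (Or.inl (Multiset.mem_add.2 (Or.inl h)))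
        · exact Multiset.mem_add.2 (Or.inl (Multiset.mem_add.2 (Or.inr h)))))
      (fun A hA => by cases hA; exact hB.1)
    have i2 := ih2 (fun F hF => hG F (by
        rcases Multiset.mem_add.1 hF with h | h
        · exact Multiset.mem_add.2 (Or.inl (Multiset.mem_add.2 (Or.inl h)))
        · exact Multiset.mem_add.2 (Or.inr h)))
      (fun A hA => by cases hA; exact hC.1)
    simp only [Multiset.count_add] at i1 i2 ⊢
    simp [hB.2.1, hB.2.2] at i1
    simp [hC.2.1, hC.2.2] at i2
    simp [h1, h2]
    omega
  | @fone Θ hΘ =>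
    intro _ _
    obtain ⟨h1, h2⟩ := count_zero_of_qm (p := p) (Θ := Θ)
      (fun F hF => (hΘ F hF).elim fun B hB => ⟨Lbl.inf, B, hB⟩)
    simp [h1, h2]
  | @fbang Γ' Δ u C hΓ hΔ hd ih =>
    intro _ _
    obtain ⟨h1, h2⟩ := count_zero_of_qm (p := p) (Θ := Γ')
      (fun F hF => by obtain ⟨v, B, hB, _⟩ := hΓ F hF; exact ⟨v, B, hB⟩)
    obtain ⟨h3, h4⟩ := count_zero_of_qm (p := p) (Θ := Δ)
      (fun F hF => (hΔ F hF).elim fun B hB => ⟨Lbl.inf, B, hB⟩)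
    simp [h1, h2, h3, h4]
  | @blur Ω N hneg hΩ hd ih =>
    intro hG hf
    have hN : Good p N := hf N rfl
    have ih' := ih (fun F hF => by
        rcases Multiset.mem_cons.1 hF with h | h
        · exact h ▸ hN
        · exact hG F h)
      (fun A hA => by cases hA)
    have hNa : N ≠ Fm.atom p := by rintro rfl; simp [Fm.isNeg] at hneg
    by_cases h1 : N = Fm.natom p
    · subst h1
      simp [Multiset.count_cons] at ih' ⊢
      omega
    · simp [Multiset.count_cons, Ne.symm h1, Ne.symm hNa, h1, hNa] at ih' ⊢
      omega
  | @par Γ' A B hd ih =>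
    intro hG hf
    have hp : Good p (Fm.par A B) := hG _ (Multiset.mem_cons_self _ _)
    have hAB : Good p A ∧ Good p B ∧ A ≠ Fm.atom p ∧ B ≠ Fm.atom p := by
      simpa [Good] using hp
    have ih' := ih (fun F hF => by
        rcases Multiset.mem_cons.1 hF with h | h
        · exact h ▸ hAB.1
        · rcases Multiset.mem_cons.1 h with h | h
          · exact h ▸ hAB.2.1
          · exact hG F (Multiset.mem_cons_of_mem h))
      (fun A hA => by cases hA)
    have hA' : Fm.atom p ≠ A := fun h => hAB.2.2.1 h.symm
    have hB' : Fm.atom p ≠ B := fun h => hAB.2.2.2 h.symm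
    have e1 : Multiset.count (Fm.atom p) (A ::ₘ B ::ₘ Γ') =
        Multiset.count (Fm.atom p) Γ' := by
      rw [Multiset.count_cons_of_ne hA', Multiset.count_cons_of_ne hB']
    have mono : Multiset.count (Fm.natom p) Γ' ≤
        Multiset.count (Fm.natom p) (A ::ₘ B ::ₘ Γ') :=
      Multiset.count_le_of_le _
        (le_trans (Multiset.le_cons_self _ _) (Multiset.le_cons_self _ _))
    rw [Multiset.count_cons_of_ne (by simp : Fm.natom p ≠ Fm.par A B),
      Multiset.count_cons_of_ne (by simp : Fm.atom p ≠ Fm.par A B)]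
    rw [e1] at ih'
    simp at ih' ⊢
    omega
  | @bot Γ' hd ih =>
    intro hG hf
    have ih' := ih (fun F hF => hG F (Multiset.mem_cons_of_mem hF))
      (fun A hA => by cases hA)
    simp only [Multiset.count_cons] at ih' ⊢
    simp at ih' ⊢
    omega
  | @decide Ω P hpos hΩ hd ih =>
    intro hG hf
    have hP : Good p P := hG _ (Multiset.mem_cons_self _ _)
    have ih' := ih (fun F hF => hG F (Multiset.mem_cons_of_mem hF))
      (fun A hA => by cases hA; exact hP)
    have hPn : P ≠ Fm.natom p := by rintro rfl; simp [Fm.isPos] at hpos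
    by_cases h1 : P = Fm.atom p
    · subst h1
      simp [Multiset.count_cons] at ih' ⊢
      omega
    · simp [Multiset.count_cons, Ne.symm h1, Ne.symm hPn, h1, hPn] at ih' ⊢
      omega
  | @ldecide Ω u A hu hΩ hd ih =>
    intro hG hf
    have hq : Good p (Fm.qm u A) := hG _ (Multiset.mem_cons_self _ _)
    have hA : Good p A ∧ A ≠ Fm.atom p := by simpa [Good] using hq
    have ih' := ih (fun F hF => hG F (Multiset.mem_cons_of_mem hF))
      (fun B hB => by cases hB; exact hA.1)
    by_cases h1 : A = Fm.natom p
    · subst h1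
      simp [Multiset.count_cons, hA.2] at ih' ⊢
      omega
    · simp [Multiset.count_cons, h1, hA.2] at ih' ⊢
      omega
  | @udecide Ω A hΩ hd ih =>
    intro hG hf
    have hq : Good p (Fm.qm Lbl.inf A) := hG _ (Multiset.mem_cons_self _ _)
    have hA : Good p A ∧ A ≠ Fm.atom p := by simpa [Good] using hq
    have ih' := ih hG (fun B hB => by cases hB; exact hA.1)
    by_cases h1 : A = Fm.natom p
    · subst h1
      simp [Multiset.count_cons, hA.2] at ih' ⊢
      omega
    · simp [Multiset.count_cons, h1, hA.2] at ih' ⊢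
      omega


/-- If the context is `Good p` and contains no naked `atom p`, then the
focused sequent `⊢ Γ, [¬p]` is underivable. -/
lemma no_focus_natom (p : ℕ) {Γ : Multiset Fm}
    (hG : ∀ F ∈ Γ, Good p F) (hA : Fm.atom p ∉ Γ) :
    ¬ FDer Γ (some (Fm.natom p)) := by
  intro h
  have := fder_count p h hG (fun A hA => by cases hA; simp [Good])
  rw [Multiset.count_eq_zero_of_notMem hA] at this
  simp at this

private lemma mem_piCtx {M : Prog} {F : Fm} (h : F ∈ PiCtx M) :
    ∃ e ∈ M, F ∈ encInstr e := by
  induction M with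
  | nil => simp [PiCtx] at h
  | cons e M ih =>
    simp only [PiCtx, List.map_cons, List.sum_cons, Multiset.mem_add] at h
    rcases h with h | h
    · exact ⟨e, by simp, h⟩
    · obtain ⟨e', he', hF⟩ := ih h
      exact ⟨e', by simp [he'], hF⟩

private lemma good_pi {p : ℕ} (hp : p < 2) {M : Prog} {F : Fm}
    (h : F ∈ PiCtx M) : Good p F ∧ ∀ q, F ≠ Fm.atom q := by
  obtain ⟨⟨q, i, r⟩, _, hF⟩ := mem_piCtx h
  cases i <;> simp only [encInstr] at hF <;> simp at hF
  case halt =>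
    rcases hF with rfl | rfl | rfl | rfl <;>
      simp [Good, stA, nSt, hA, nH, raA, rbA, nRa, nRb, qa, qb] <;> omega
  all_goals subst hF
  all_goals simp [Good, stA, nSt, hA, nH, raA, rbA, nRa, nRb, qa, qb]
  all_goals omega

/-- Goodness and absence of naked positive atoms for contexts of the shape
of the encoding. -/
private lemma ctx_classify {M : Prog} {m n q : ℕ} {F : Fm}
    (h : F ∈ qmInf (PiCtx M) +
      (Multiset.replicate m qa + Multiset.replicate n qb + {nSt q})) :
    (∃ π ∈ PiCtx M, F = Fm.qm Lbl.inf π) ∨ F = qa ∨ F = qb ∨ F = nSt q := by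
  simp only [qmInf, Multiset.mem_add, Multiset.mem_map, Multiset.mem_replicate,
    Multiset.mem_singleton] at h
  rcases h with ⟨π, hπ, rfl⟩ | (⟨-, rfl⟩ | ⟨-, rfl⟩) | rfl
  · exact Or.inl ⟨π, hπ, rfl⟩
  · exact Or.inr (Or.inl rfl)
  · exact Or.inr (Or.inr (Or.inl rfl))
  · exact Or.inr (Or.inr (Or.inr rfl))

private lemma ctx_good {p : ℕ} (hp : p < 2) {M : Prog} {F : Fm}
    (h : (∃ π ∈ PiCtx M, F = Fm.qm Lbl.inf π) ∨ F = qa ∨ F = qb ∨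
      ∃ q, F = nSt q) :
    Good p F ∧ F ≠ Fm.atom p := by
  rcases h with ⟨π, hπ, rfl⟩ | rfl | rfl | ⟨q, rfl⟩
  · obtain ⟨hg, hna⟩ := good_pi hp hπ
    exact ⟨⟨hg, hna p⟩, by simp⟩
  · refine ⟨⟨trivial, ?_⟩, by simp [qa]⟩
    simp [nRa]
  · refine ⟨⟨trivial, ?_⟩, by simp [qb]⟩
    simp [nRb]
  · exact ⟨trivial, by simp [nSt]⟩

private lemma encCfg_eq (c : Cfg) : encCfg c =
    Multiset.replicate c.a qa + Multiset.replicate c.b qb + {nSt c.q} := rfl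

/-- For any configuration `c = ⟨q, v⟩` with `v(a) > 0`, the
premise obtained by applying `ldecide` to an occurrence of `?^a ¬r_a` in
`⊢ ?^∞Π, ⟨c⟩`, namely `⊢ ?^∞Π, (⟨c⟩ minus one `?^a ¬r_a`), [¬r_a]`, is not
derivable in the focused calculus; likewise with `b`, `r_b` when `v(b) > 0`.
Consequently, any focused proof of `⊢ ?^∞Π, ⟨c⟩` must begin (reading from the
conclusion) with an instance of `udecide` focusing on an element of `?^∞Π`. -/
theorem ldecide_premise_underivable (M : Prog) (hdet : Deterministic M)
    (hwf : WellFormed M) (c : Cfg) :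
    (0 < c.a → ¬ FDer (qmInf (PiCtx M) +
        (Multiset.replicate (c.a - 1) qa + Multiset.replicate c.b qb
          + {nSt c.q})) (some nRa)) ∧
    (0 < c.b → ¬ FDer (qmInf (PiCtx M) +
        (Multiset.replicate c.a qa + Multiset.replicate (c.b - 1) qb
          + {nSt c.q})) (some nRb)) ∧
    (FDer (encSeq M c) none →
      ∃ A ∈ PiCtx M, FDer (encSeq M c) (some A)) := by
  have key : ∀ p : ℕ, p < 2 → ∀ m n q : ℕ,
      ¬ FDer (qmInf (PiCtx M) +
        (Multiset.replicate m qa + Multiset.replicate n qb + {nSt q}))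
        (some (Fm.natom p)) := by
    intro p hp m n q
    apply no_focus_natom
    · intro F hF
      refine (ctx_good (M := M) hp ?_).1
      rcases ctx_classify hF with h | h | h | h
      exacts [Or.inl h, Or.inr (Or.inl h), Or.inr (Or.inr (Or.inl h)),
        Or.inr (Or.inr (Or.inr ⟨q, h⟩))]
    · intro hF
      refine (ctx_good (M := M) hp ?_).2 rfl
      rcases ctx_classify hF with h | h | h | h
      exacts [Or.inl h, Or.inr (Or.inl h), Or.inr (Or.inr (Or.inl h)),
        Or.inr (Or.inr (Or.inr ⟨q, h⟩))]
  have hgood : ∀ (p : ℕ), p < 2 → ∀ F ∈ encSeq M c, Good p F ∧ F ≠ Fm.atom p := by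
    intro p hp F hF
    have hF' : F ∈ qmInf (PiCtx M) +
        (Multiset.replicate c.a qa + Multiset.replicate c.b qb + {nSt c.q}) := hF
    refine ctx_good (M := M) hp ?_
    rcases ctx_classify hF' with h | h | h | h
    exacts [Or.inl h, Or.inr (Or.inl h), Or.inr (Or.inr (Or.inl h)),
      Or.inr (Or.inr (Or.inr ⟨c.q, h⟩))]
  refine ⟨fun _ => key 0 (by norm_num) _ _ _, fun _ => key 1 (by norm_num) _ _ _, ?_⟩
  intro h
  generalize hE : encSeq M c = S at h
  cases h with
  | par hd =>
    rename_i Γ A B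
    have hm : Fm.par A B ∈ encSeq M c := by rw [hE]; exact Multiset.mem_cons_self _ _
    rcases ctx_classify (hm : Fm.par A B ∈ _) with ⟨π, _, hc⟩ | hc | hc | hc <;>
      simp [qa, qb, nSt] at hc
  | bot hd =>
    have hm : Fm.bot ∈ encSeq M c := by rw [hE]; exact Multiset.mem_cons_self _ _
    rcases ctx_classify (hm : Fm.bot ∈ _) with ⟨π, _, hc⟩ | hc | hc | hc <;>
      simp [qa, qb, nSt] at hc
  | decide hpos hΩ hd =>
    rename_i Ω P
    have hm : P ∈ encSeq M c := by rw [hE]; exact Multiset.mem_cons_self _ _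
    rcases ctx_classify (hm : P ∈ _) with ⟨π, _, hc⟩ | hc | hc | hc <;>
      subst hc <;> simp [qa, qb, nSt, Fm.isPos] at hpos
  | ldecide hu hΩ hd =>
    rename_i Ω u A
    have hm : Fm.qm u A ∈ encSeq M c := by rw [hE]; exact Multiset.mem_cons_self _ _
    have hsub : ∀ F ∈ Ω, F ∈ encSeq M c := by
      intro F hF; rw [hE]; exact Multiset.mem_cons_of_mem hF
    rcases ctx_classify (hm : Fm.qm u A ∈ _) with ⟨π, _, hc⟩ | hc | hc | hc
    · simp only [Fm.qm.injEq] at hc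
      exact absurd hc.1 hu
    · simp only [qa, Fm.qm.injEq] at hc
      obtain ⟨rfl, rfl⟩ := hc
      exact absurd hd (no_focus_natom 0
        (fun F hF => (hgood 0 (by norm_num) F (hsub F hF)).1)
        (fun hF => (hgood 0 (by norm_num) _ (hsub _ hF)).2 rfl))
    · simp only [qb, Fm.qm.injEq] at hc
      obtain ⟨rfl, rfl⟩ := hc
      exact absurd hd (no_focus_natom 1
        (fun F hF => (hgood 1 (by norm_num) F (hsub F hF)).1)
        (fun hF => (hgood 1 (by norm_num) _ (hsub _ hF)).2 rfl))
    · simp [nSt] at hc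
  | udecide hΩ hd =>
    rename_i Ω A
    have hm : Fm.qm Lbl.inf A ∈ encSeq M c := by
      rw [hE]; exact Multiset.mem_cons_self _ _
    rcases ctx_classify (hm : Fm.qm Lbl.inf A ∈ _) with ⟨π, hπ, hc⟩ | hc | hc | hc
    · simp only [Fm.qm.injEq] at hc
      obtain ⟨-, h2⟩ := hc
      subst h2
      refine ⟨A, hπ, ?_⟩
      first
      | exact hd
      | (rw [hE]; exact hd)
    · simp [qa] at hc
    · simp [qb] at hc
    · simp [nSt] at hc

end Msel
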